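/- Forward step simulation of the BPEL translation: for all BPEL activities B, B' and states s, s', if B at state s makes a BPEL small step to B' at state s', then there exists a label δ such that the compiled PiCore event system makes a matching step: Σ ⊢ (compile B, s) —δ→ (compile B', s'). -/

import Mathlib

namespace PiCore

/-- Event systems of the PiCore event specification language. -/
inductive EventSys (Lbl Prog St : Type) : Type where
  | basic (ev : Set (Lbl × Set St × Prog))
  | atom (ev : Set (Lbl × Set St × Prog))
  | trig (P : Prog)
  | seq (S1 S2 : EventSys Lbl Prog St)
  | choice (S1 S2 : EventSys Lbl Prog St)
  | join (S1 S2 : EventSys Lbl Prog St)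
  | iter (b : Set St) (S : EventSys Lbl Prog St)

/-- Transition kinds of event systems: anonymous τ, event entry, atomic event entry. -/
inductive TranKind (Lbl : Type) : Type where
  | tau
  | evt (l : Lbl)
  | aevt (l : Lbl)

variable {Lbl Prog St Env : Type} (K : Type)
variable (ptran : Env → Prog × St → Prog × St → Prop) (bot : Prog)

/-- Labelled small-step semantics of event systems. -/
inductive esStep (Γ : Env) :
    EventSys Lbl Prog St × St → TranKind Lbl × K → EventSys Lbl Prog St × St → Prop where
  | basicEvt {ev : Set (Lbl × Set St × Prog)} {l g P s κ}
      (h1 : (l, g, P) ∈ ev) (h2 : s ∈ g) :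
      esStep Γ (.basic ev, s) (.evt l, κ) (.trig P, s)
  | atomEvt {ev : Set (Lbl × Set St × Prog)} {l g P s t κ}
      (h1 : (l, g, P) ∈ ev) (h2 : s ∈ g)
      (h3 : Relation.ReflTransGen (fun c c' => ptran Γ c c') (P, s) (bot, t)) :
      esStep Γ (.atom ev, s) (.aevt l, κ) (.trig bot, t)
  | trigEvt {P Q s t κ} (h : ptran Γ (P, s) (Q, t)) :
      esStep Γ (.trig P, s) (.tau, κ) (.trig Q, t)
  | seqStep {S1 S1' S2 s t} {δ : TranKind Lbl × K}
      (h : esStep Γ (S1, s) δ (S1', t)) (hne : S1' ≠ .trig bot) :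
      esStep Γ (.seq S1 S2, s) δ (.seq S1' S2, t)
  | seqFin {S1 S2 s t} {δ : TranKind Lbl × K}
      (h : esStep Γ (S1, s) δ (.trig bot, t)) :
      esStep Γ (.seq S1 S2, s) δ (S2, t)
  | choice1 {S1 S2 S1' s t} {δ : TranKind Lbl × K}
      (h : esStep Γ (S1, s) δ (S1', t)) :
      esStep Γ (.choice S1 S2, s) δ (S1', t)
  | choice2 {S1 S2 S2' s t} {δ : TranKind Lbl × K}
      (h : esStep Γ (S2, s) δ (S2', t)) :
      esStep Γ (.choice S1 S2, s) δ (S2', t)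
  | join1 {S1 S2 S1' s t} {δ : TranKind Lbl × K}
      (h : esStep Γ (S1, s) δ (S1', t)) :
      esStep Γ (.join S1 S2, s) δ (.join S1' S2, t)
  | join2 {S1 S2 S2' s t} {δ : TranKind Lbl × K}
      (h : esStep Γ (S2, s) δ (S2', t)) :
      esStep Γ (.join S1 S2, s) δ (.join S1 S2', t)
  | joinFin {s κ} :
      esStep Γ (.join (.trig bot) (.trig bot), s) (.tau, κ) (.trig bot, s)
  | iterT {b S s κ} (h : s ∈ b) (hne : S ≠ .trig bot) :
      esStep Γ (.iter b S, s) (.tau, κ) (.seq S (.iter b S), s)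
  | iterF {b S s κ} (h : s ∉ b) :
      esStep Γ (.iter b S, s) (.tau, κ) (.trig bot, s)

/-- Linear computations of event systems. -/
inductive cpts (Γ : Env) : List (EventSys Lbl Prog St × St) → Prop where
  | one {S s} : cpts Γ [(S, s)]
  | env {S s t cs} (h : cpts Γ ((S, t) :: cs)) : cpts Γ ((S, s) :: (S, t) :: cs)
  | act {S1 S2 s t cs} {δ : TranKind Lbl × K}
      (h1 : esStep K ptran bot Γ (S1, s) δ (S2, t))
      (h2 : cpts Γ ((S2, t) :: cs)) : cpts Γ ((S1, s) :: (S2, t) :: cs)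

/-- Sequential lifting of a computation. -/
def liftSeq (Q : EventSys Lbl Prog St) (c : List (EventSys Lbl Prog St × St)) :
    List (EventSys Lbl Prog St × St) :=
  c.map fun p => (.seq p.1 Q, p.2)

/-- Modular computations of event systems. -/
inductive cptsM (Γ : Env) : List (EventSys Lbl Prog St × St) → Prop where
  | one {S s} : cptsM Γ [(S, s)]
  | env {S s t cs} (h : cptsM Γ ((S, t) :: cs)) : cptsM Γ ((S, s) :: (S, t) :: cs)
  | trigEvt {P Q s t cs} (h : ptran Γ (P, s) (Q, t))
      (h2 : cptsM Γ ((.trig Q, t) :: cs)) :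
      cptsM Γ ((.trig P, s) :: (.trig Q, t) :: cs)
  | basicEvt {ev : Set (Lbl × Set St × Prog)} {l g P s cs}
      (h1 : (l, g, P) ∈ ev) (h2 : s ∈ g)
      (h3 : cptsM Γ ((.trig P, s) :: cs)) :
      cptsM Γ ((.basic ev, s) :: (.trig P, s) :: cs)
  | atomEvt {ev : Set (Lbl × Set St × Prog)} {l g P s t cs}
      (h1 : (l, g, P) ∈ ev) (h2 : s ∈ g)
      (h3 : Relation.ReflTransGen (fun c c' => ptran Γ c c') (P, s) (bot, t))
      (h4 : cptsM Γ ((.trig bot, t) :: cs)) :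
      cptsM Γ ((.atom ev, s) :: (.trig bot, t) :: cs)
  | seqStep {S1 S1' S2 s t cs} {δ : TranKind Lbl × K}
      (h : esStep K ptran bot Γ (S1, s) δ (S1', t)) (hne : S1' ≠ .trig bot)
      (h2 : cptsM Γ ((.seq S1' S2, t) :: cs)) :
      cptsM Γ ((.seq S1 S2, s) :: (.seq S1' S2, t) :: cs)
  | seqFin {S1 S2 s t cs} {δ : TranKind Lbl × K}
      (h : esStep K ptran bot Γ (S1, s) δ (.trig bot, t))
      (h2 : cptsM Γ ((S2, t) :: cs)) :
      cptsM Γ ((.seq S1 S2, s) :: (S2, t) :: cs)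
  | chc1 {S1 S2 S1' s t cs} {δ : TranKind Lbl × K}
      (h : esStep K ptran bot Γ (S1, s) δ (S1', t))
      (h2 : cptsM Γ ((S1', t) :: cs)) :
      cptsM Γ ((.choice S1 S2, s) :: (S1', t) :: cs)
  | chc2 {S1 S2 S2' s t cs} {δ : TranKind Lbl × K}
      (h : esStep K ptran bot Γ (S2, s) δ (S2', t))
      (h2 : cptsM Γ ((S2', t) :: cs)) :
      cptsM Γ ((.choice S1 S2, s) :: (S2', t) :: cs)
  | join1 {S1 S2 S1' s t cs} {δ : TranKind Lbl × K}
      (h : esStep K ptran bot Γ (S1, s) δ (S1', t))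
      (h2 : cptsM Γ ((.join S1' S2, t) :: cs)) :
      cptsM Γ ((.join S1 S2, s) :: (.join S1' S2, t) :: cs)
  | join2 {S1 S2 S2' s t cs} {δ : TranKind Lbl × K}
      (h : esStep K ptran bot Γ (S2, s) δ (S2', t))
      (h2 : cptsM Γ ((.join S1 S2', t) :: cs)) :
      cptsM Γ ((.join S1 S2, s) :: (.join S1 S2', t) :: cs)
  | joinFin {s cs} (h : cptsM Γ ((.trig bot, s) :: cs)) :
      cptsM Γ ((.join (.trig bot) (.trig bot), s) :: (.trig bot, s) :: cs)
  | iterF {b S s cs} (h : s ∉ b) (h2 : cptsM Γ ((.trig bot, s) :: cs)) :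
      cptsM Γ ((.iter b S, s) :: (.trig bot, s) :: cs)
  | iterTOne {b S s cs} (h : s ∈ b) (h2 : cptsM Γ ((S, s) :: cs)) :
      cptsM Γ ((.iter b S, s) :: liftSeq (.iter b S) ((S, s) :: cs))
  | iterTMore {b S s t cs cs'} {δ : TranKind Lbl × K}
      (h : s ∈ b) (h2 : cptsM Γ ((S, s) :: cs))
      (h3 : esStep K ptran bot Γ (((S, s) :: cs).getLast (List.cons_ne_nil _ _)) δ
              (.trig bot, t))
      (h4 : cptsM Γ ((.iter b S, t) :: cs')) :
      cptsM Γ ((.iter b S, s) ::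
        (liftSeq (.iter b S) ((S, s) :: cs) ++ (.iter b S, t) :: cs'))



end PiCore

namespace BPEL

open PiCore

/-- An IMP-like program language: the terminal program ⊥, atomic state
transformations `basic f`, and sequencing. -/
inductive Imp (St : Type) : Type where
  | fin
  | basic (f : St → St)
  | seq (P Q : Imp St)

/-- The `SKIP` statement. -/
def SKIP (St : Type) : Imp St := .basic id

/-- Small-step semantics of the IMP-like language. -/
inductive impTran {St : Type} : Imp St × St → Imp St × St → Prop where
  | basic {f : St → St} {s : St} : impTran (.basic f, s) (.fin, f s)
  | seqStep {P P' Q : Imp St} {s t : St}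
      (h : impTran (P, s) (P', t)) (hne : P' ≠ .fin) :
      impTran (.seq P Q, s) (.seq P' Q, t)
  | seqFin {P Q : Imp St} {s t : St} (h : impTran (P, s) (.fin, t)) :
      impTran (.seq P Q, s) (Q, t)

/-- Flow element of a BPEL activity: optional targets (a join condition and a
list of target links) and optional sources (links with transition conditions). -/
structure FlowEle (St : Type) : Type where
  targets : Option ((St → Prop) × List String)
  sources : Option (List (String × (St → Prop)))

mutual
/-- Abstract syntax of (a core subset of) BPEL activities. -/
inductive Activity (St : Type) : Type where
  | invoke (fls : FlowEle St) (ptl ptt opn : String) (spc : St → St)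
      (cts : List (String × Activity St)) (cta : Activity St)
  | receive (fls : FlowEle St) (ptl ptt opn : String) (spc : St → St)
  | reply (fls : FlowEle St) (ptl ptt opn : String)
  | assign (fls : FlowEle St) (spc : St → St)
  | wait (fls : FlowEle St) (time : ℕ)
  | empty (fls : FlowEle St)
  | seq (A1 A2 : Activity St)
  | ifA (c : Set St) (A1 A2 : Activity St)
  | whileA (c : Set St) (A : Activity St)
  | flow (A1 A2 : Activity St)
  | pick (H1 H2 : EventHandler St)
  | fin

/-- BPEL event handlers. -/
inductive EventHandler (St : Type) : Type where
  | onMessage (ptl ptt opn : String) (spc : St → St) (A : Activity St)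
  | onAlarm (time : ℕ) (A : Activity St)
end

section Sem
variable {St : Type}
variable (tick : St → ℕ)
variable (targetsSat : Option ((St → Prop) × List String) → St → Prop)
variable (fireSources : Option (List (String × (St → Prop))) → St → St)

/-- Small-step semantics of BPEL event handlers. -/
inductive ehStep : EventHandler St → St → Activity St → St → Prop where
  | onMessage {ptl ptt opn spc A s} :
      ehStep (.onMessage ptl ptt opn spc A) s A (spc s)
  | onAlarm {time A s} (h : time > tick s) :
      ehStep (.onAlarm time A) s A s

/-- Small-step operational semantics of BPEL activities. -/
inductive bpelStep : Activity St → St → Activity St → St → Prop where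
  | invokeSuc {fls ptl ptt opn spc cts cta s}
      (h : targetsSat fls.targets s) :
      bpelStep (.invoke fls ptl ptt opn spc cts cta) s .fin
        (fireSources fls.sources (spc s))
  | invokeFault {fls ptl ptt opn spc cts cta s} {evh : Activity St}
      (h : targetsSat fls.targets s)
      (hm : evh ∈ cts.map Prod.snd ∨ evh = cta) :
      bpelStep (.invoke fls ptl ptt opn spc cts cta) s evh
        (fireSources fls.sources s)
  | receive {fls ptl ptt opn spc s} (h : targetsSat fls.targets s) :
      bpelStep (.receive fls ptl ptt opn spc) s .fin
        (fireSources fls.sources (spc s))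
  | reply {fls ptl ptt opn s} (h : targetsSat fls.targets s) :
      bpelStep (.reply fls ptl ptt opn) s .fin (fireSources fls.sources s)
  | assign {fls spc s} (h : targetsSat fls.targets s) :
      bpelStep (.assign fls spc) s .fin (fireSources fls.sources (spc s))
  | wait {fls time s} (h : targetsSat fls.targets s) (ht : time > tick s) :
      bpelStep (.wait fls time) s .fin (fireSources fls.sources s)
  | empty {fls s} (h : targetsSat fls.targets s) :
      bpelStep (.empty fls) s .fin (fireSources fls.sources s)
  | seqStep {A1 A1' A2 s t} (h : bpelStep A1 s A1' t) (hne : A1' ≠ .fin) :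
      bpelStep (.seq A1 A2) s (.seq A1' A2) t
  | seqFin {A1 A2 s t} (h : bpelStep A1 s .fin t) :
      bpelStep (.seq A1 A2) s A2 t
  | ifT {c A1 A2 s} (h : s ∈ c) : bpelStep (.ifA c A1 A2) s A1 s
  | ifF {c A1 A2 s} (h : s ∉ c) : bpelStep (.ifA c A1 A2) s A2 s
  | whileT {c A s} (h : s ∈ c) (hne : A ≠ .fin) :
      bpelStep (.whileA c A) s (.seq A (.whileA c A)) s
  | whileF {c A s} (h : s ∉ c) : bpelStep (.whileA c A) s .fin s
  | flow1 {A1 A1' A2 s t} (h : bpelStep A1 s A1' t) :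
      bpelStep (.flow A1 A2) s (.flow A1' A2) t
  | flow2 {A1 A2 A2' s t} (h : bpelStep A2 s A2' t) :
      bpelStep (.flow A1 A2) s (.flow A1 A2') t
  | flowFin {s} : bpelStep (.flow .fin .fin) s .fin s
  | pick1 {H1 H2 A s t} (h : ehStep tick H1 s A t) :
      bpelStep (.pick H1 H2) s A t
  | pick2 {H1 H2 A s t} (h : ehStep tick H2 s A t) :
      bpelStep (.pick H1 H2) s A t

end Sem

/-- Labels of events in the PiCore translation of BPEL, encoding the activity
kind and its partner-link / port-type / operation names. -/
inductive EvtLbl : Type where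
  | invoke (ptl ptt opn : String)
  | receive (ptl ptt opn : String)
  | reply (ptl ptt opn : String)
  | assign
  | wait
  | empty
  | ifT
  | ifF
  | onMessage (ptl ptt opn : String)
  | onAlarm

/-- Event systems of the BPEL translation. -/
abbrev ES (St : Type) : Type := EventSys EvtLbl (Imp St) St

/-- Nondeterministic choice of a list of event systems. -/
def chooseList {St : Type} : List (ES St) → ES St
  | [] => .trig .fin
  | [a] => a
  | a :: b :: xs => .choice a (chooseList (b :: xs))

section Compile
variable {St : Type}
variable (tick : St → ℕ)
variable (targetsSat : Option ((St → Prop) × List String) → St → Prop)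
variable (fireSources : Option (List (String × (St → Prop))) → St → St)

/-- The failure event of an `invoke` activity: it only fires the source links. -/
def failEvt (fls : FlowEle St) (ptl ptt opn : String) : ES St :=
  .atom {(EvtLbl.invoke ptl ptt opn, {s | targetsSat fls.targets s},
          Imp.basic (fireSources fls.sources))}

mutual
/-- The verified translation from BPEL activities to PiCore event systems. -/
def compile : Activity St → ES St
  | .invoke fls ptl ptt opn spc cts cta =>
      .choice
        (.atom {(EvtLbl.invoke ptl ptt opn, {s | targetsSat fls.targets s},
            Imp.seq (.basic spc) (.basic (fireSources fls.sources)))})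
        (chooseList
          (.seq (failEvt targetsSat fireSources fls ptl ptt opn) (compile cta) ::
            compileList fls ptl ptt opn cts))
  | .receive fls ptl ptt opn spc =>
      .atom {(EvtLbl.receive ptl ptt opn, {s | targetsSat fls.targets s},
          Imp.seq (.basic spc) (.basic (fireSources fls.sources)))}
  | .reply fls ptl ptt opn =>
      .atom {(EvtLbl.reply ptl ptt opn, {s | targetsSat fls.targets s},
          Imp.basic (fireSources fls.sources))}
  | .assign fls spc =>
      .atom {(EvtLbl.assign, {s | targetsSat fls.targets s},
          Imp.seq (.basic spc) (.basic (fireSources fls.sources)))}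
  | .wait fls time =>
      .atom {(EvtLbl.wait, {s | targetsSat fls.targets s ∧ time > tick s},
          Imp.basic (fireSources fls.sources))}
  | .empty fls =>
      .atom {(EvtLbl.empty, {s | targetsSat fls.targets s},
          Imp.basic (fireSources fls.sources))}
  | .seq A1 A2 => .seq (compile A1) (compile A2)
  | .ifA c A1 A2 =>
      .choice (.seq (.atom {(EvtLbl.ifT, c, SKIP St)}) (compile A1))
              (.seq (.atom {(EvtLbl.ifF, cᶜ, SKIP St)}) (compile A2))
  | .whileA c A => .iter c (compile A)
  | .flow A1 A2 => .join (compile A1) (compile A2)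
  | .pick H1 H2 => .choice (compileEH H1) (compileEH H2)
  | .fin => .trig .fin

/-- Translation of BPEL event handlers. -/
def compileEH : EventHandler St → ES St
  | .onMessage ptl ptt opn spc A =>
      .seq (.atom {(EvtLbl.onMessage ptl ptt opn, Set.univ, Imp.basic spc)})
           (compile A)
  | .onAlarm time A =>
      .seq (.atom {(EvtLbl.onAlarm, {s | time > tick s}, SKIP St)})
           (compile A)

/-- Translation of the fault handlers of an `invoke` activity. -/
def compileList (fls : FlowEle St) (ptl ptt opn : String) :
    List (String × Activity St) → List (ES St)
  | [] => []
  | (_, a) :: rest =>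
      .seq (failEvt targetsSat fireSources fls ptl ptt opn) (compile a) ::
        compileList fls ptl ptt opn rest
end

end Compile

end BPEL

/-! Each BPEL rule is matched by the PiCore rule of the constructor its activity compiles to. A
basic activity becomes a singleton atomic event whose body `basic f` or `seq (basic f) (basic g)`
runs to `⊥` in one or two IMP steps; a guard event followed by a continuation (`if`, `pick`, a
fault handler) is left by `seqFin`; the congruence rules follow by induction. The side conditions
`A ≠ fin` of BPEL carry over because only `fin` compiles to a triggered event. -/

namespace BPEL

open PiCore Relation

variable {St Lbl Env K : Type} {Γ : Env} {κ : K}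

theorem impTran_basic_run (f : St → St) (s : St) :
    ReflTransGen impTran (.basic f, s) (.fin, f s) :=
  .single .basic

theorem impTran_seq_basic_run (f g : St → St) (s : St) :
    ReflTransGen impTran (.seq (.basic f) (.basic g), s) (.fin, g (f s)) :=
  .head (.seqFin .basic) (.single .basic)

theorem esStep_atom_basic {l : Lbl} {g : Set St} {f : St → St} {s : St} (hs : s ∈ g) :
    esStep K (fun _ : Env => impTran) Imp.fin Γ
      (.atom {(l, g, .basic f)}, s) (.aevt l, κ) (.trig .fin, f s) :=
  .atomEvt rfl hs (impTran_basic_run f s)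

theorem esStep_atom_seq_basic {l : Lbl} {g : Set St} {f f' : St → St} {s : St} (hs : s ∈ g) :
    esStep K (fun _ : Env => impTran) Imp.fin Γ
      (.atom {(l, g, .seq (.basic f) (.basic f'))}, s) (.aevt l, κ) (.trig .fin, f' (f s)) :=
  .atomEvt rfl hs (impTran_seq_basic_run f f' s)

theorem esStep_seq_atom_basic {l : Lbl} {g : Set St} {f : St → St}
    {S : EventSys Lbl (Imp St) St} {s : St} (hs : s ∈ g) :
    esStep K (fun _ : Env => impTran) Imp.fin Γ
      (.seq (.atom {(l, g, .basic f)}) S, s) (.aevt l, κ) (S, f s) :=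
  .seqFin (esStep_atom_basic hs)

theorem esStep_chooseList_of_mem {ptran : Env → Imp St × St → Imp St × St → Prop}
    {bot : Imp St} {l : List (ES St)} {S S' : ES St} {s t : St} {δ : TranKind EvtLbl × K}
    (hS : S ∈ l) (h : esStep K ptran bot Γ (S, s) δ (S', t)) :
    esStep K ptran bot Γ (chooseList l, s) δ (S', t) := by
  induction l with
  | nil => cases hS
  | cons a rest ih =>
    rcases rest with _ | ⟨b, xs⟩
    · rw [List.mem_singleton] at hS
      subst hS
      exact h
    · rcases List.mem_cons.mp hS with rfl | hS
      · exact .choice1 h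
      · exact .choice2 (ih hS)

section Compile

variable (tick : St → ℕ)
    (targetsSat : Option ((St → Prop) × List String) → St → Prop)
    (fireSources : Option (List (String × (St → Prop))) → St → St)

theorem compile_ne_trig {A : Activity St} (hA : A ≠ .fin) (P : Imp St) :
    compile tick targetsSat fireSources A ≠ .trig P := by
  cases A <;> simp [compile] at hA ⊢

theorem seq_failEvt_mem_compileList {fls : FlowEle St} {ptl ptt opn : String}
    {cts : List (String × Activity St)} {A : Activity St} (hA : A ∈ cts.map Prod.snd) :
    .seq (failEvt targetsSat fireSources fls ptl ptt opn)
        (compile tick targetsSat fireSources A) ∈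
      compileList tick targetsSat fireSources fls ptl ptt opn cts := by
  induction cts with
  | nil => simp at hA
  | cons p rest ih =>
    rw [List.map_cons, List.mem_cons] at hA
    rcases hA with rfl | hA
    · exact List.mem_cons_self
    · exact List.mem_cons_of_mem _ (ih hA)

theorem esStep_compile_invoke_fault {fls : FlowEle St} {ptl ptt opn : String} {spc : St → St}
    {cts : List (String × Activity St)} {cta A : Activity St} {s : St}
    (hs : targetsSat fls.targets s) (hA : A ∈ cts.map Prod.snd ∨ A = cta) :
    esStep K (fun _ : Env => impTran) Imp.fin Γ
      (compile tick targetsSat fireSources (.invoke fls ptl ptt opn spc cts cta), s)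
      (.aevt (.invoke ptl ptt opn), κ)
      (compile tick targetsSat fireSources A, fireSources fls.sources s) := by
  refine .choice2 (esStep_chooseList_of_mem ?_ (esStep_seq_atom_basic hs))
  rcases hA with hA | rfl
  · exact List.mem_cons_of_mem _ (seq_failEvt_mem_compileList tick targetsSat fireSources hA)
  · exact List.mem_cons_self

theorem exists_esStep_compileEH_of_ehStep {H : EventHandler St} {A : Activity St} {s t : St}
    (h : ehStep tick H s A t) :
    ∃ k : TranKind EvtLbl, esStep K (fun _ : Env => impTran) Imp.fin Γ
      (compileEH tick targetsSat fireSources H, s) (k, κ)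
      (compile tick targetsSat fireSources A, t) := by
  cases h with
  | onMessage => exact ⟨_, esStep_seq_atom_basic (Set.mem_univ _)⟩
  | onAlarm ht => exact ⟨_, esStep_seq_atom_basic (f := id) ht⟩

end Compile

end BPEL

open PiCore BPEL in
/-- **Forward step simulation of the BPEL translation:** every BPEL small step
is matched by a labelled step of the compiled PiCore event system. -/
theorem compile_forward_simulation {St : Type}
    (tick : St → ℕ)
    (targetsSat : Option ((St → Prop) × List String) → St → Prop)
    (fireSources : Option (List (String × (St → Prop))) → St → St) :
    ∀ (B B' : Activity St) (s s' : St),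
      bpelStep tick targetsSat fireSources B s B' s' →
      ∃ δ : TranKind EvtLbl × Unit,
        esStep Unit (fun _ : Unit => impTran) Imp.fin ()
          (compile tick targetsSat fireSources B, s) δ
          (compile tick targetsSat fireSources B', s') := by
  intro B B' s s' h
  induction h with
  | invokeSuc hs => exact ⟨(.aevt _, ()), .choice1 (esStep_atom_seq_basic hs)⟩
  | invokeFault hs hA => exact ⟨(.aevt _, ()), esStep_compile_invoke_fault _ _ _ hs hA⟩
  | receive hs | assign hs => exact ⟨(.aevt _, ()), esStep_atom_seq_basic hs⟩
  | reply hs | empty hs => exact ⟨(.aevt _, ()), esStep_atom_basic hs⟩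
  | wait hs ht => exact ⟨(.aevt _, ()), esStep_atom_basic ⟨hs, ht⟩⟩
  | seqStep _ hne ih => exact ih.imp fun _ hδ => .seqStep hδ (compile_ne_trig _ _ _ hne _)
  | seqFin _ ih => exact ih.imp fun _ => .seqFin
  | ifT hs => exact ⟨(.aevt _, ()), .choice1 (esStep_seq_atom_basic (f := id) hs)⟩
  | ifF hs => exact ⟨(.aevt _, ()), .choice2 (esStep_seq_atom_basic (f := id) hs)⟩
  | whileT hs hne => exact ⟨(.tau, ()), .iterT hs (compile_ne_trig _ _ _ hne _)⟩
  | whileF hs => exact ⟨(.tau, ()), .iterF hs⟩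
  | flow1 _ ih => exact ih.imp fun _ => .join1
  | flow2 _ ih => exact ih.imp fun _ => .join2
  | flowFin => exact ⟨(.tau, ()), .joinFin⟩
  | pick1 hs =>
    exact (exists_esStep_compileEH_of_ehStep _ _ _ hs).elim fun k hk => ⟨(k, ()), .choice1 hk⟩
  | pick2 hs =>
    exact (exists_esStep_compileEH_of_ehStep _ _ _ hs).elim fun k hk => ⟨(k, ()), .choice2 hk⟩
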